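/- arXiv:2210.16377 — 6 statements merged into one kernel-verified Lean document; each statement's English description precedes it below -/
import Mathlib

section
/- Abstract coercivity of the optimal-control least-squares bilinear form: Let X, Y, Y⋆, Z be Hilbert spaces, L : Y → Z and L⋆ : Y⋆ → Z boundedly invertible bounded linear operators, I : Y → Z and I⋆ : Y⋆ → Z bounded linear operators with ⟨L y, I⋆ p⟩ = ⟨I y, L⋆ p⟩ for all y ∈ Y, p ∈ Y⋆; let A : Z → Z and B : X → Z be bounded linear, and C : X → X bounded self-adjoint with ⟨C u, u⟩ ≥ κ‖u‖² for some κ > 0. Define a_γ(u,y,p; v,z,q) = γ⟨L y + B u, L z + B v⟩ + γ⟨L⋆ p − A*A I y, L⋆ q − A*A I z⟩ + ⟨−B* I⋆ p + C u, v⟩. Then there exist γ₀ > 0 and c > 0 such that for all γ ≥ γ₀: ‖u‖² + ‖y‖²_Y + ‖p‖²_{Y⋆} ≤ c · a_γ(u,y,p; u,y,p) for all (u,y,p) ∈ X × Y × Y⋆. -/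
open scoped RealInnerProductSpace
open ContinuousLinearMap

set_option maxHeartbeats 1000000

lemma key_sq (K κ γ a b t α β Q : ℝ)
    (hK : 1 ≤ K) (hκ : 0 < κ)
    (ha : 0 ≤ a) (hb : 0 ≤ b) (ht : 0 ≤ t) (hα : 0 ≤ α) (hβ : 0 ≤ β)
    (h1 : α ≤ K*a + K^2*t)
    (h2 : β ≤ K*b + K^2*α)
    (h3 : γ*(a^2+b^2) + κ*t^2 - K*β*a - K*α*b ≤ Q)
    (hγ : 1 + 4*K^10*(1+1/κ) ≤ γ) :
    t^2 + α^2 + β^2 ≤ (10*K^8*(1+2/κ)) * Q := by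
  have hK0 : (0:ℝ) < K := lt_of_lt_of_le one_pos hK
  have hκ' : κ ≠ 0 := ne_of_gt hκ
  have h2' : β ≤ K*b + K^3*a + K^4*t := by
    nlinarith [mul_le_mul_of_nonneg_left h1 (by positivity : (0:ℝ) ≤ K^2)]
  have y1 : K^5*(t*a) ≤ κ/4*t^2 + K^10/κ*a^2 := by
    have h := div_nonneg (sq_nonneg (κ*t - 2*K^5*a)) (by positivity : (0:ℝ) ≤ 4*κ)
    have hid : (κ*t - 2*K^5*a)^2/(4*κ) = κ/4*t^2 + K^10/κ*a^2 - K^5*(t*a) := by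
      field_simp; ring
    linarith [hid ▸ h]
  have y2 : K^3*(t*b) ≤ κ/4*t^2 + K^6/κ*b^2 := by
    have h := div_nonneg (sq_nonneg (κ*t - 2*K^3*b)) (by positivity : (0:ℝ) ≤ 4*κ)
    have hid : (κ*t - 2*K^3*b)^2/(4*κ) = κ/4*t^2 + K^6/κ*b^2 - K^3*(t*b) := by
      field_simp; ring
    linarith [hid ▸ h]
  have y3 : K^2*(a*b) ≤ K^2/2*a^2 + K^2/2*b^2 := by
    nlinarith [mul_nonneg (sq_nonneg K) (sq_nonneg (a-b))]
  have p2 : K^2 ≤ K^10 := pow_le_pow_right₀ hK (by norm_num)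
  have p4 : K^4 ≤ K^10 := pow_le_pow_right₀ hK (by norm_num)
  have p6 : K^6 ≤ K^10 := pow_le_pow_right₀ hK (by norm_num)
  have p6d : K^6/κ ≤ K^10/κ := div_le_div_of_nonneg_right p6 hκ.le
  have hd0 : 0 ≤ K^10/κ := by positivity
  have p10 : (0:ℝ) ≤ K^10 := by positivity
  have c1 : K*β*a ≤ K^2*(a*b) + K^4*a^2 + K^5*(t*a) := by
    nlinarith [mul_le_mul_of_nonneg_left h2' (mul_nonneg hK0.le ha)]
  have c2 : K*α*b ≤ K^2*(a*b) + K^3*(t*b) := by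
    nlinarith [mul_le_mul_of_nonneg_left h1 (mul_nonneg hK0.le hb)]
  -- coefficient bound: K^2 + K^4 + K^10/κ ≤ γ - 1 and K^2 + K^6/κ ≤ γ - 1
  have hγ' : 4*K^10 + 4*(K^10/κ) + 1 ≤ γ := by
    have : 4*K^10*(1+1/κ) = 4*K^10 + 4*(K^10/κ) := by field_simp
    linarith [hγ, this]
  have hcross : K*β*a + K*α*b ≤ κ/2*t^2 + (γ-1)*a^2 + (γ-1)*b^2 := by
    have ca : K^2/2 + K^2/2 + K^4 + K^10/κ ≤ γ - 1 := by linarith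
    have cb : K^2/2 + K^2/2 + K^6/κ ≤ γ - 1 := by linarith
    linarith [c1, c2, y1, y2, y3, mul_le_mul_of_nonneg_right ca (sq_nonneg a),
      mul_le_mul_of_nonneg_right cb (sq_nonneg b)]
  have hQ : a^2 + b^2 + κ/2*t^2 ≤ Q := by linarith
  have q28 : K^2 ≤ K^8 := pow_le_pow_right₀ hK (by norm_num)
  have q48 : K^4 ≤ K^8 := pow_le_pow_right₀ hK (by norm_num)
  have q68 : K^6 ≤ K^8 := pow_le_pow_right₀ hK (by norm_num)
  have q18 : 1 ≤ K^8 := one_le_pow₀ hK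
  have hα2 : α^2 ≤ 2*K^4*a^2 + 2*K^4*t^2 := by
    nlinarith [mul_self_le_mul_self hα h1, sq_nonneg (K*a - K^2*t),
      mul_le_mul_of_nonneg_right (pow_le_pow_right₀ hK (by norm_num : 2 ≤ 4)) (sq_nonneg a)]
  have hβ2 : β^2 ≤ 3*K^8*a^2 + 3*K^8*b^2 + 3*K^8*t^2 := by
    nlinarith [mul_self_le_mul_self hβ h2', sq_nonneg (K*b - K^3*a), sq_nonneg (K*b - K^4*t),
      sq_nonneg (K^3*a - K^4*t),
      mul_le_mul_of_nonneg_right q28 (sq_nonneg b),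
      mul_le_mul_of_nonneg_right q68 (sq_nonneg a),
      mul_le_mul_of_nonneg_right q28 (sq_nonneg t)]
  have step1 : t^2 + α^2 + β^2 ≤ 6*K^8*(t^2+a^2+b^2) := by
    nlinarith [hα2, hβ2, mul_le_mul_of_nonneg_right q18 (sq_nonneg t),
      mul_le_mul_of_nonneg_right q48 (sq_nonneg t),
      mul_le_mul_of_nonneg_right q48 (sq_nonneg a), sq_nonneg b]
  have hexp : (1+2/κ)*(a^2+b^2+κ/2*t^2)
      = a^2+b^2+κ/2*t^2 + 2/κ*a^2 + 2/κ*b^2 + t^2 := by field_simp; ring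
  have step2 : t^2+a^2+b^2 ≤ (1+2/κ)*(a^2+b^2+κ/2*t^2) := by
    rw [hexp]
    have h1' : 0 ≤ 2/κ*a^2 := by positivity
    have h2'' : 0 ≤ 2/κ*b^2 := by positivity
    have h3' : 0 ≤ κ/2*t^2 := by positivity
    linarith
  have hc2 : 0 < 1+2/κ := by positivity
  have hQ0 : 0 ≤ a^2+b^2+κ/2*t^2 := by positivity
  calc t^2 + α^2 + β^2 ≤ 6*K^8*(t^2+a^2+b^2) := step1
    _ ≤ 6*K^8*((1+2/κ)*(a^2+b^2+κ/2*t^2)) := by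
        apply mul_le_mul_of_nonneg_left step2 (by positivity)
    _ ≤ 10*K^8*((1+2/κ)*(a^2+b^2+κ/2*t^2)) := by
        apply mul_le_mul_of_nonneg_right _ (by positivity)
        nlinarith [pow_pos hK0 8]
    _ ≤ (10*K^8*(1+2/κ)) * Q := by
        linarith [mul_le_mul_of_nonneg_left hQ
          (show (0:ℝ) ≤ 10*K^8*(1+2/κ) by positivity)]

/-- Abstract coercivity of the optimal-control least-squares bilinear form: with boundedly
invertible `L, Ls`, the adjointness relation (A3) between `(L, J)` and `(Ls, Js)`, bounded
`A, B` and a self-adjoint coercive `C`, there are `γ₀ > 0` and `c > 0` such that for all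
`γ ≥ γ₀` the quadratic form `a_γ(u,y,p;u,y,p)` controls `‖u‖² + ‖y‖² + ‖p‖²`. -/
theorem stmt6 {X Y Ys Z : Type*}
    [NormedAddCommGroup X] [InnerProductSpace ℝ X] [CompleteSpace X]
    [NormedAddCommGroup Y] [InnerProductSpace ℝ Y] [CompleteSpace Y]
    [NormedAddCommGroup Ys] [InnerProductSpace ℝ Ys] [CompleteSpace Ys]
    [NormedAddCommGroup Z] [InnerProductSpace ℝ Z] [CompleteSpace Z]
    (L : Y →L[ℝ] Z) (Ls : Ys →L[ℝ] Z) (J : Y →L[ℝ] Z) (Js : Ys →L[ℝ] Z)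
    (A : Z →L[ℝ] Z) (B : X →L[ℝ] Z) (C : X →L[ℝ] X)
    (CL : ℝ) (hCL : 0 < CL)
    (hLlow : ∀ y : Y, ‖y‖ ≤ CL * ‖L y‖) (hLsurj : Function.Surjective L)
    (hLslow : ∀ p : Ys, ‖p‖ ≤ CL * ‖Ls p‖) (hLssurj : Function.Surjective Ls)
    (hadj : ∀ (y : Y) (p : Ys), ⟪L y, Js p⟫ = ⟪J y, Ls p⟫)
    (hCsym : ∀ u w : X, ⟪C u, w⟫ = ⟪u, C w⟫)
    (κ : ℝ) (hκ : 0 < κ) (hCcoer : ∀ u : X, κ * ‖u‖ ^ 2 ≤ ⟪C u, u⟫) :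
    ∃ γ₀ > (0 : ℝ), ∃ c > (0 : ℝ), ∀ γ ≥ γ₀, ∀ (u : X) (y : Y) (p : Ys),
      ‖u‖ ^ 2 + ‖y‖ ^ 2 + ‖p‖ ^ 2 ≤
        c * (γ * ‖L y + B u‖ ^ 2 + γ * ‖Ls p - adjoint A (A (J y))‖ ^ 2 +
          ⟪-(adjoint B (Js p)) + C u, u⟫) := by
  have hTnorm : ∀ y' : Y, ‖adjoint A (A (J y'))‖ ≤ ‖(adjoint A).comp (A.comp J)‖ * ‖y'‖ :=
    fun y' => ContinuousLinearMap.le_opNorm ((adjoint A).comp (A.comp J)) y'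
  set NT : ℝ := ‖(adjoint A).comp (A.comp J)‖ with hNT
  have hNT0 : 0 ≤ NT := norm_nonneg _
  clear_value NT
  set K : ℝ := 1 + CL + ‖B‖ + ‖J‖ + ‖Js‖ + NT with hKdef
  have hB0 := norm_nonneg B
  have hJ0 := norm_nonneg J
  have hJs0 := norm_nonneg Js
  have hK : 1 ≤ K := by simp only [hKdef]; linarith
  have hCLK : CL ≤ K := by simp only [hKdef]; linarith
  have hBK : ‖B‖ ≤ K := by simp only [hKdef]; linarith
  have hJK : ‖J‖ ≤ K := by simp only [hKdef]; linarith
  have hJsK : ‖Js‖ ≤ K := by simp only [hKdef]; linarith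
  have hTK : NT ≤ K := by simp only [hKdef]; linarith
  clear_value K
  have hK0 : (0:ℝ) < K := lt_of_lt_of_le one_pos hK
  have hio : (0:ℝ) < 1 + 1/κ := by
    have := one_div_pos.mpr hκ; linarith
  have hio2 : (0:ℝ) < 1 + 2/κ := by
    have : (0:ℝ) < 2/κ := div_pos (by norm_num) hκ
    linarith
  have hγ0 : (0:ℝ) < 1 + 4*K^10*(1+1/κ) := by
    have := mul_pos (mul_pos (by norm_num : (0:ℝ) < 4) (pow_pos hK0 10)) hio
    linarith
  have hc0 : (0:ℝ) < 10*K^8*(1+2/κ) :=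
    mul_pos (mul_pos (by norm_num) (pow_pos hK0 8)) hio2
  refine ⟨1 + 4*K^10*(1+1/κ), hγ0, 10*K^8*(1+2/κ), hc0, ?_⟩
  intro γ hγ u y p
  set r : Z := L y + B u with hr
  set s : Z := Ls p - adjoint A (A (J y)) with hs
  have hTy : ‖adjoint A (A (J y))‖ ≤ NT * ‖y‖ := hTnorm y
  clear_value r s
  -- bound on ‖y‖
  have h1 : ‖y‖ ≤ K*‖r‖ + K^2*‖u‖ := by
    have hy := hLlow y
    have hLyr : ‖L y‖ ≤ ‖r‖ + ‖B‖*‖u‖ := by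
      have hLyeq : L y = r - B u := by rw [hr]; abel
      rw [hLyeq]
      exact le_trans (norm_sub_le _ _) (by linarith [B.le_opNorm u])
    have hmm : CL*‖B‖ ≤ K*K := mul_le_mul hCLK hBK (norm_nonneg B) hK0.le
    have e2 := mul_le_mul_of_nonneg_left hLyr hCL.le
    have e3 := mul_le_mul_of_nonneg_right hCLK (norm_nonneg r)
    have e4 := mul_le_mul_of_nonneg_right hmm (norm_nonneg u)
    nlinarith [norm_nonneg u]
  -- bound on ‖p‖
  have h2 : ‖p‖ ≤ K*‖s‖ + K^2*‖y‖ := by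
    have hp := hLslow p
    have hLsp : ‖Ls p‖ ≤ ‖s‖ + NT*‖y‖ := by
      have hLseq : Ls p = s + adjoint A (A (J y)) := by rw [hs]; abel
      rw [hLseq]
      exact le_trans (norm_add_le _ _) (by linarith)
    have hmm : CL*NT ≤ K*K := mul_le_mul hCLK hTK hNT0 hK0.le
    have e2 := mul_le_mul_of_nonneg_left hLsp hCL.le
    have e3 := mul_le_mul_of_nonneg_right hCLK (norm_nonneg s)
    have e4 := mul_le_mul_of_nonneg_right hmm (norm_nonneg y)
    nlinarith [norm_nonneg y]
  -- expansion of the inner product term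
  have e1 : ⟪-(adjoint B (Js p)) + C u, u⟫
      = -⟪Js p, r⟫ + ⟪J y, s⟫ + ‖A (J y)‖^2 + ⟪C u, u⟫ := by
    have hBu : B u = r - L y := by rw [hr]; abel
    have hLs : Ls p = s + adjoint A (A (J y)) := by rw [hs]; abel
    have i1 : ⟪Js p, L y⟫ = ⟪J y, s⟫ + ‖A (J y)‖^2 := by
      rw [real_inner_comm, hadj, hLs, inner_add_right, adjoint_inner_right,
        real_inner_self_eq_norm_sq]
    rw [inner_add_left, inner_neg_left, adjoint_inner_left, hBu, inner_sub_right, i1]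
    ring
  have b1 : ⟪Js p, r⟫ ≤ K*‖p‖*‖r‖ := by
    have hin := real_inner_le_norm (Js p) r
    have hJsp : ‖Js p‖ ≤ K*‖p‖ := le_trans (Js.le_opNorm p)
      (mul_le_mul_of_nonneg_right hJsK (norm_nonneg p))
    have := mul_le_mul_of_nonneg_right hJsp (norm_nonneg r)
    linarith
  have b2 : -(K*‖y‖*‖s‖) ≤ ⟪J y, s⟫ := by
    have hin := neg_abs_le (⟪J y, s⟫ : ℝ)
    have habs := abs_real_inner_le_norm (J y) s
    have hJy : ‖J y‖ ≤ K*‖y‖ := le_trans (J.le_opNorm y)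
      (mul_le_mul_of_nonneg_right hJK (norm_nonneg y))
    have := mul_le_mul_of_nonneg_right hJy (norm_nonneg s)
    linarith
  have h3 : γ*(‖r‖^2+‖s‖^2) + κ*‖u‖^2 - K*‖p‖*‖r‖ - K*‖y‖*‖s‖
      ≤ γ * ‖r‖ ^ 2 + γ * ‖s‖ ^ 2 + ⟪-(adjoint B (Js p)) + C u, u⟫ := by
    rw [e1]
    have hc := hCcoer u
    have hA := sq_nonneg ‖A (J y)‖
    linarith
  exact key_sq K κ γ ‖r‖ ‖s‖ ‖u‖ ‖y‖ ‖p‖ _ hK hκ (norm_nonneg r) (norm_nonneg s)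
    (norm_nonneg u) (norm_nonneg y) (norm_nonneg p) h1 h2 h3 hγ
end

section
/- Lions–Stampacchia existence and uniqueness: Let H be a real Hilbert space, a : H × H → ℝ a bounded bilinear form that is coercive (a(x,x) ≥ α‖x‖² for some α > 0, without assuming symmetry), ℓ ∈ H' a bounded linear functional, and K ⊆ H a nonempty closed convex set. Then there exists a unique x ∈ K such that a(x, v − x) ≥ ℓ(v − x) for all v ∈ K. -/
/-!
Solutions of the variational inequality are the fixed points of `x ↦ P_K (x - ρ (A x - f))`, where
`A` and `f` represent `a` and `l` through the Riesz isomorphism and `P_K` is the (nonexpansive)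
metric projection onto `K`. Coercivity makes `x ↦ x - ρ A x` a strict contraction for
`ρ = α / L²` with `L = max ‖A‖ α`, so Banach's fixed point theorem gives existence; uniqueness
follows from coercivity applied to the difference of two solutions.
-/

open RealInnerProductSpace

theorem eq_of_forall_le_apply_sub_of_coercive {E : Type*} [NormedAddCommGroup E] [Module ℝ E]
    (a : E →ₗ[ℝ] E →ₗ[ℝ] ℝ) {α : ℝ} (hα : 0 < α) (hcoer : ∀ x, α * ‖x‖ ^ 2 ≤ a x x)
    (l : E →ₗ[ℝ] ℝ) {K : Set E} {x y : E} (hx : x ∈ K) (hy : y ∈ K)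
    (hxK : ∀ v ∈ K, l (v - x) ≤ a x (v - x)) (hyK : ∀ v ∈ K, l (v - y) ≤ a y (v - y)) :
    x = y := by
  have hneg : a (y - x) (y - x) ≤ 0 := by
    have h₁ := hxK y hy
    have h₂ := hyK x hx
    rw [← neg_sub y x, map_neg, map_neg] at h₂
    simp only [map_sub, LinearMap.sub_apply] at h₁ h₂ ⊢
    linarith
  have hsq : ‖y - x‖ ^ 2 = 0 :=
    le_antisymm (nonpos_of_mul_nonpos_right ((hcoer _).trans hneg) hα) (sq_nonneg _)
  exact (sub_eq_zero.mp (norm_eq_zero.mp (pow_eq_zero_iff two_ne_zero |>.mp hsq))).symm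

section Hilbert

variable {H : Type*} [NormedAddCommGroup H] [InnerProductSpace ℝ H]

theorem exists_mem_forall_inner_sub_nonpos [CompleteSpace H] {K : Set H} (hKne : K.Nonempty)
    (hKcl : IsClosed K) (hKconv : Convex ℝ K) (u : H) :
    ∃ p ∈ K, ∀ w ∈ K, ⟪u - p, w - p⟫ ≤ 0 := by
  obtain ⟨p, hp, hmin⟩ := exists_norm_eq_iInf_of_complete_convex hKne hKcl.isComplete hKconv u
  exact ⟨p, hp, (norm_eq_iInf_iff_real_inner_le_zero hKconv hp).1 hmin⟩

theorem norm_sub_le_of_forall_inner_sub_nonpos {K : Set H} {u w p q : H} (hp : p ∈ K)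
    (hq : q ∈ K) (hpu : ∀ z ∈ K, ⟪u - p, z - p⟫ ≤ 0) (hqw : ∀ z ∈ K, ⟪w - q, z - q⟫ ≤ 0) :
    ‖p - q‖ ≤ ‖u - w‖ := by
  have h₁ := hpu q hq
  have h₂ := hqw p hp
  have hsplit : ⟪u - w, p - q⟫ = ‖p - q‖ ^ 2 - ⟪u - p, q - p⟫ - ⟪w - q, p - q⟫ := by
    rw [← real_inner_self_eq_norm_sq, ← neg_sub p q, inner_neg_right, ← sub_eq_zero]
    simp only [inner_sub_left, inner_sub_right, real_inner_comm]
    ring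
  have hcs : ‖p - q‖ ^ 2 ≤ ‖u - w‖ * ‖p - q‖ := by
    linarith [real_inner_le_norm (u - w) (p - q)]
  nlinarith [norm_nonneg (p - q), norm_nonneg (u - w)]

theorem norm_sub_smul_le_of_coercive (A : H → H) {α L : ℝ} (hα : 0 < α) (hαL : α ≤ L)
    (hL : ∀ x, ‖A x‖ ≤ L * ‖x‖) (hcoer : ∀ x, α * ‖x‖ ^ 2 ≤ ⟪A x, x⟫) (x : H) :
    ‖x - (α / L ^ 2) • A x‖ ≤ √(1 - α ^ 2 / L ^ 2) * ‖x‖ := by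
  have hL0 : 0 < L := hα.trans_le hαL
  have hC : 0 ≤ 1 - α ^ 2 / L ^ 2 := by
    rw [sub_nonneg, div_le_one (by positivity)]
    nlinarith
  rw [← Real.sqrt_sq (norm_nonneg x), ← Real.sqrt_mul hC]
  refine (Real.le_sqrt (norm_nonneg _) (by positivity)).2 ?_
  have hAx : ‖A x‖ ^ 2 ≤ L ^ 2 * ‖x‖ ^ 2 := by
    rw [← mul_pow]
    exact pow_le_pow_left₀ (norm_nonneg _) (hL x) 2
  rw [norm_sub_sq_real, real_inner_smul_right, norm_smul, Real.norm_of_nonneg (by positivity),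
    mul_pow, real_inner_comm]
  have hρ : α / L ^ 2 * (α * ‖x‖ ^ 2) ≤ α / L ^ 2 * ⟪A x, x⟫ :=
    mul_le_mul_of_nonneg_left (hcoer x) (by positivity)
  have hρ' : (α / L ^ 2) ^ 2 * ‖A x‖ ^ 2 ≤ (α / L ^ 2) ^ 2 * (L ^ 2 * ‖x‖ ^ 2) :=
    mul_le_mul_of_nonneg_left hAx (by positivity)
  have hcancel : (α / L ^ 2) ^ 2 * (L ^ 2 * ‖x‖ ^ 2) = α / L ^ 2 * (α * ‖x‖ ^ 2) := by
    field_simp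
  have hlhs : (1 - α ^ 2 / L ^ 2) * ‖x‖ ^ 2 = ‖x‖ ^ 2 - α / L ^ 2 * (α * ‖x‖ ^ 2) := by ring
  linarith

theorem exists_forall_inner_sub_le_of_coercive [CompleteSpace H] (A : H →L[ℝ] H) {α : ℝ}
    (hα : 0 < α) (hcoer : ∀ x, α * ‖x‖ ^ 2 ≤ ⟪A x, x⟫) (f : H) {K : Set H}
    (hKne : K.Nonempty) (hKcl : IsClosed K) (hKconv : Convex ℝ K) :
    ∃ x ∈ K, ∀ v ∈ K, ⟪f, v - x⟫ ≤ ⟪A x, v - x⟫ := by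
  choose P hPK hP using exists_mem_forall_inner_sub_nonpos hKne hKcl hKconv
  set L := max ‖A‖ α
  set ρ := α / L ^ 2
  set c := √(1 - α ^ 2 / L ^ 2)
  have hρ : 0 < ρ := by positivity
  have hc : c < 1 := by
    rw [Real.sqrt_lt' one_pos, one_pow, sub_lt_self_iff]
    positivity
  set T : H → H := fun x => P (x - ρ • (A x - f))
  have hT : ContractingWith ⟨c, Real.sqrt_nonneg _⟩ T := by
    refine ⟨hc, LipschitzWith.of_dist_le_mul fun x y => ?_⟩
    rw [dist_eq_norm, dist_eq_norm]
    calc ‖T x - T y‖ ≤ ‖(x - ρ • (A x - f)) - (y - ρ • (A y - f))‖ :=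
          norm_sub_le_of_forall_inner_sub_nonpos (hPK _) (hPK _) (hP _) (hP _)
      _ = ‖(x - y) - ρ • A (x - y)‖ := by
          rw [map_sub, smul_sub, smul_sub, smul_sub]
          congr 1
          abel
      _ ≤ c * ‖x - y‖ :=
          norm_sub_smul_le_of_coercive A hα (le_max_right _ _)
            (fun z => (A.le_opNorm z).trans (by gcongr; exact le_max_left _ _)) hcoer _
  set x := ContractingWith.fixedPoint T hT
  have hfix : P (x - ρ • (A x - f)) = x := hT.fixedPoint_isFixedPt
  refine ⟨x, hfix ▸ hPK _, fun v hv => ?_⟩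
  have h := hP (x - ρ • (A x - f)) v hv
  rw [hfix, sub_sub_cancel_left, inner_neg_left, real_inner_smul_left, inner_sub_left,
    neg_nonpos] at h
  linarith [nonneg_of_mul_nonneg_right h hρ]

end Hilbert

/-- Lions–Stampacchia theorem: for a bounded, coercive (not necessarily symmetric) bilinear
form `a` on a real Hilbert space `H`, a bounded linear functional `l`, and a nonempty closed
convex set `K`, there is a unique `x ∈ K` with `a(x, v − x) ≥ l(v − x)` for all `v ∈ K`. -/
theorem stmt8 {H : Type*} [NormedAddCommGroup H] [InnerProductSpace ℝ H] [CompleteSpace H]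
    (a : H →ₗ[ℝ] H →ₗ[ℝ] ℝ) (M α : ℝ)
    (hbdd : ∀ x y : H, |a x y| ≤ M * ‖x‖ * ‖y‖)
    (hα : 0 < α) (hcoer : ∀ x : H, α * ‖x‖ ^ 2 ≤ a x x)
    (l : H →L[ℝ] ℝ)
    (K : Set H) (hKne : K.Nonempty) (hKcl : IsClosed K) (hKconv : Convex ℝ K) :
    ∃! x : H, x ∈ K ∧ ∀ v ∈ K, l (v - x) ≤ a x (v - x) := by
  set B := a.mkContinuous₂ M hbdd
  have hB : ∀ x y, ⟪InnerProductSpace.continuousLinearMapOfBilin B x, y⟫ = a x y := fun x y =>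
    (InnerProductSpace.continuousLinearMapOfBilin_apply B x y).trans rfl
  have hf : ∀ y, ⟪(InnerProductSpace.toDual ℝ H).symm l, y⟫ = l y := fun _ =>
    InnerProductSpace.toDual_symm_apply
  obtain ⟨x, hxK, hx⟩ := exists_forall_inner_sub_le_of_coercive
    (InnerProductSpace.continuousLinearMapOfBilin B) hα (fun x => (hB x x).symm ▸ hcoer x)
    ((InnerProductSpace.toDual ℝ H).symm l) hKne hKcl hKconv
  have hxsol : ∀ v ∈ K, l (v - x) ≤ a x (v - x) := fun v hv => by
    simpa only [hB, hf] using hx v hv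
  exact ⟨x, ⟨hxK, hxsol⟩, fun y ⟨hyK, hy⟩ =>
    eq_of_forall_le_apply_sub_of_coercive a hα hcoer l hyK hxK hy hxsol⟩
end

section
/- Falk-type quasi-optimality for variational inequalities: Let H be a real Hilbert space, a : H × H → ℝ bounded (constant M) and coercive (constant α > 0), K ⊆ H nonempty closed convex, ℓ ∈ H', and F ∈ H'. Suppose x ∈ K satisfies a(x, v) = ℓ(v) + F(v) for all v ∈ H, and additionally a(x, v−x) ≥ ℓ(v−x) for all v ∈ K. Let K_h ⊆ K be a nonempty closed convex subset and let x_h ∈ K_h solve a(x_h, v_h − x_h) ≥ ℓ(v_h − x_h) for all v_h ∈ K_h. Then there is a constant c depending only on M and α such that ‖x − x_h‖² ≤ c · inf_{v_h ∈ K_h} ( ‖x − v_h‖² + F(v_h − x) ). -/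
/-- Falk-type quasi-optimality for variational inequalities: with `a` bounded (constant `M`)
and coercive (constant `α`), for any data `l, F`, sets `Kh ⊆ K`, continuous solution `x`
(satisfying `a(x,·) = l(·) + F(·)` and the variational inequality on `K`) and discrete solution
`xh` of the variational inequality on `Kh`, one has
`‖x − xh‖² ≤ c (‖x − vh‖² + F(vh − x))` for all `vh ∈ Kh`, with `c` depending only on `M, α`. -/
theorem stmt9 {H : Type*} [NormedAddCommGroup H] [InnerProductSpace ℝ H] [CompleteSpace H]
    (a : H →ₗ[ℝ] H →ₗ[ℝ] ℝ) (M α : ℝ)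
    (hbdd : ∀ x y : H, |a x y| ≤ M * ‖x‖ * ‖y‖)
    (hα : 0 < α) (hcoer : ∀ y : H, α * ‖y‖ ^ 2 ≤ a y y) :
    ∃ c > (0 : ℝ), ∀ (l F : H →L[ℝ] ℝ) (K Kh : Set H),
      Kh ⊆ K → K.Nonempty → IsClosed K → Convex ℝ K →
      Kh.Nonempty → IsClosed Kh → Convex ℝ Kh →
      ∀ x ∈ K, ∀ xh ∈ Kh,
        (∀ v : H, a x v = l v + F v) →
        (∀ v ∈ K, l (v - x) ≤ a x (v - x)) →
        (∀ vh ∈ Kh, l (vh - xh) ≤ a xh (vh - xh)) →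
        ∀ vh ∈ Kh, ‖x - xh‖ ^ 2 ≤ c * (‖x - vh‖ ^ 2 + F (vh - x)) := by
  have hα2 : (0:ℝ) < α ^ 2 := by positivity
  refine ⟨M ^ 2 / α ^ 2 + 2 / α, by positivity, ?_⟩
  intro l F K Kh hKhK _ _ _ _ _ _ x hx xh hxh hid hVI hVIh vh hvh
  -- F is nonnegative on K - x
  have hFvx : 0 ≤ F (vh - x) := by
    have h1 := hVI vh (hKhK hvh)
    have h2 := hid (vh - x)
    linarith
  have hFxxh : F (x - xh) ≤ 0 := by
    have h1 := hVI xh (hKhK hxh)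
    have h2 := hid (xh - x)
    have h3 : F (x - xh) = - F (xh - x) := by
      rw [show x - xh = -(xh - x) by abel, map_neg]
    linarith
  -- coercivity
  have hc := hcoer (x - xh)
  -- split the bilinear form
  have e1 : a (x - xh) (x - xh) = a x (x - xh) - a xh (x - xh) := by
    simp only [map_sub, LinearMap.sub_apply]; ring
  have e2 : a x (x - xh) = l (x - xh) + F (x - xh) := hid _
  have e3 : a xh (x - xh) = a xh (x - vh) + a xh (vh - xh) := by
    rw [← map_add]; congr 1; abel
  have e4 := hVIh vh hvh
  have e5 : a x (x - vh) = l (x - vh) + F (x - vh) := hid _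
  have e6 : a (x - xh) (x - vh) = a x (x - vh) - a xh (x - vh) := by
    simp only [map_sub, LinearMap.sub_apply]; ring
  have e7 : l (x - xh) - l (vh - xh) = l (x - vh) := by
    rw [← map_sub]; congr 1; abel
  have e8 : F (x - xh) - F (x - vh) = F (vh - x) + F (x - xh) := by
    rw [← map_sub, show (x - xh) - (x - vh) = (vh - x) + (x - xh) by abel, map_add]
  have ebdd : a (x - xh) (x - vh) ≤ M * ‖x - xh‖ * ‖x - vh‖ :=
    le_trans (le_abs_self _) (hbdd _ _)
  -- key inequality: α‖e‖² ≤ M‖e‖‖x-vh‖ + F(vh-x)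
  have key : α * ‖x - xh‖ ^ 2 ≤ M * ‖x - xh‖ * ‖x - vh‖ + F (vh - x) := by
    linarith [hc, e1, e2, e3, e4, e5, e6, e7, e8, ebdd, hFxxh]
  -- Young: 2αM‖e‖‖A‖ ≤ α²‖e‖² + M²‖A‖²
  have young : 2 * α * (M * ‖x - xh‖ * ‖x - vh‖) ≤
      α ^ 2 * ‖x - xh‖ ^ 2 + M ^ 2 * ‖x - vh‖ ^ 2 := by
    nlinarith [sq_nonneg (α * ‖x - xh‖ - M * ‖x - vh‖)]
  have key2 : α ^ 2 * ‖x - xh‖ ^ 2 ≤ M ^ 2 * ‖x - vh‖ ^ 2 + 2 * α * F (vh - x) := by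
    nlinarith [key, young, hα]
  have hrw : M ^ 2 / α ^ 2 + 2 / α = (M ^ 2 + 2 * α) / α ^ 2 := by
    field_simp
  rw [hrw, div_mul_eq_mul_div, le_div_iff₀ hα2]
  nlinarith [key2, mul_nonneg (sq_nonneg M) hFvx, mul_nonneg hα.le (sq_nonneg ‖x - vh‖)]
end

section
/- Reliability of the a posteriori estimator (abstract form): Under the assumptions of the abstract framework, let (u, y, p) ∈ X_ad × Y × Y⋆ solve the constrained optimality system L y + B u = f, L⋆ p = A*(A I y − z_d), u = Π_{X_ad} C⁻¹ B* I⋆ p. For arbitrary (u_h, y_h, p_h) ∈ X_ad × Y × Y⋆ set ũ_h = Π_{X_ad} C⁻¹ B* I⋆ p_h and η² = ‖L y_h + B u_h − f‖² + ‖L⋆ p_h − A*(A I y_h − z_d)‖² + ‖ũ_h − u_h‖². Then η² ≤ c (‖u − u_h‖² + ‖y − y_h‖²_Y + ‖p − p_h‖²_{Y⋆}) with a constant c independent of (u_h, y_h, p_h). -/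
open scoped RealInnerProductSpace
open ContinuousLinearMap

set_option maxHeartbeats 1000000 in
/-- Reliability of the a posteriori estimator (abstract form): if `(u, y, p)` solves the
constrained optimality system `L y + B u = f`, `Ls p = A*(A J y − z_d)`,
`u = Π_{X_ad} C⁻¹ B* Js p`, where the projection `Pi` onto `X_ad` is Lipschitz, then for any
`(u_h, y_h, p_h) ∈ X_ad × Y × Y⋆`, with `ũ_h = Pi (C⁻¹ B* Js p_h)`, the estimator
`η² = ‖L y_h + B u_h − f‖² + ‖Ls p_h − A*(A J y_h − z_d)‖² + ‖ũ_h − u_h‖²` is bounded by a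
constant times the squared error. -/
theorem stmt13 {X Y Ys Z : Type*}
    [NormedAddCommGroup X] [InnerProductSpace ℝ X] [CompleteSpace X]
    [NormedAddCommGroup Y] [InnerProductSpace ℝ Y] [CompleteSpace Y]
    [NormedAddCommGroup Ys] [InnerProductSpace ℝ Ys] [CompleteSpace Ys]
    [NormedAddCommGroup Z] [InnerProductSpace ℝ Z] [CompleteSpace Z]
    (L : Y →L[ℝ] Z) (Ls : Ys →L[ℝ] Z) (J : Y →L[ℝ] Z) (Js : Ys →L[ℝ] Z)
    (A : Z →L[ℝ] Z) (B : X →L[ℝ] Z) (C : X →L[ℝ] X)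
    (hCsym : ∀ u w : X, ⟪C u, w⟫ = ⟪u, C w⟫)
    (κ : ℝ) (hκ : 0 < κ) (hCcoer : ∀ u : X, κ * ‖u‖ ^ 2 ≤ ⟪C u, u⟫)
    (Xad : Set X) (hne : Xad.Nonempty) (hcl : IsClosed Xad) (hconv : Convex ℝ Xad)
    (Pi : X → X) (hPmem : ∀ w : X, Pi w ∈ Xad)
    (CPi : ℝ) (hCPi : 0 < CPi) (hPlip : ∀ v w : X, ‖Pi v - Pi w‖ ≤ CPi * ‖v - w‖)
    (Cinv : X →L[ℝ] X) (hCinv : ∀ x : X, C (Cinv x) = x)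
    (f zd : Z) (u : X) (y : Y) (p : Ys) (huXad : u ∈ Xad)
    (hstate : L y + B u = f)
    (hadjeq : Ls p = adjoint A (A (J y) - zd))
    (hu : u = Pi (Cinv (adjoint B (Js p)))) :
    ∃ c > (0 : ℝ), ∀ uh ∈ Xad, ∀ (yh : Y) (ph : Ys),
      ‖L yh + B uh - f‖ ^ 2 + ‖Ls ph - adjoint A (A (J yh) - zd)‖ ^ 2 +
        ‖Pi (Cinv (adjoint B (Js ph))) - uh‖ ^ 2 ≤
      c * (‖u - uh‖ ^ 2 + ‖y - yh‖ ^ 2 + ‖p - ph‖ ^ 2) := by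
  set G := (adjoint A).comp (A.comp J) with hG
  set H := Cinv.comp ((adjoint B).comp Js) with hH
  set S : ℝ := ‖L‖ + ‖B‖ + ‖Ls‖ + ‖G‖ + 1 + CPi * ‖H‖ with hS
  have hL : (0:ℝ) ≤ ‖L‖ := norm_nonneg _
  have hB : (0:ℝ) ≤ ‖B‖ := norm_nonneg _
  have hLs : (0:ℝ) ≤ ‖Ls‖ := norm_nonneg _
  have hGn : (0:ℝ) ≤ ‖G‖ := norm_nonneg _
  have hHn : (0:ℝ) ≤ CPi * ‖H‖ := mul_nonneg hCPi.le (norm_nonneg _)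
  have hSpos : (0 : ℝ) < S := by rw [hS]; linarith
  refine ⟨9 * S ^ 2, by positivity, ?_⟩
  intro uh huh yh ph
  set a1 := ‖u - uh‖ with ha1
  set a2 := ‖y - yh‖ with ha2
  set a3 := ‖p - ph‖ with ha3
  have ha1n : 0 ≤ a1 := norm_nonneg _
  have ha2n : 0 ≤ a2 := norm_nonneg _
  have ha3n : 0 ≤ a3 := norm_nonneg _
  have hLS : ‖L‖ ≤ S := by rw [hS]; linarith
  have hBS : ‖B‖ ≤ S := by rw [hS]; linarith
  have hLsS : ‖Ls‖ ≤ S := by rw [hS]; linarith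
  have hGS : ‖G‖ ≤ S := by rw [hS]; linarith
  have h1S : (1:ℝ) ≤ S := by rw [hS]; linarith
  have hHS : CPi * ‖H‖ ≤ S := by rw [hS]; linarith
  have hSa1 : 0 ≤ S * a1 := mul_nonneg hSpos.le ha1n
  have hSa2 : 0 ≤ S * a2 := mul_nonneg hSpos.le ha2n
  have hSa3 : 0 ≤ S * a3 := mul_nonneg hSpos.le ha3n
  -- first residual
  have e1 : L yh + B uh - f = L (yh - y) + B (uh - u) := by
    rw [← hstate, map_sub, map_sub]; abel
  have hT1 : ‖L yh + B uh - f‖ ≤ S * (a1 + a2 + a3) := by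
    rw [e1]
    have h1 : ‖L (yh - y) + B (uh - u)‖ ≤ ‖L (yh - y)‖ + ‖B (uh - u)‖ := norm_add_le _ _
    have h2 : ‖L (yh - y)‖ ≤ ‖L‖ * ‖yh - y‖ := L.le_opNorm _
    have h3 : ‖B (uh - u)‖ ≤ ‖B‖ * ‖uh - u‖ := B.le_opNorm _
    rw [norm_sub_rev yh y, norm_sub_rev uh u] at *
    have h4 : ‖L‖ * a2 ≤ S * a2 := mul_le_mul_of_nonneg_right hLS ha2n
    have h5 : ‖B‖ * a1 ≤ S * a1 := mul_le_mul_of_nonneg_right hBS ha1n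
    have h6 : S * (a1 + a2 + a3) = S * a1 + S * a2 + S * a3 := by ring
    linarith
  -- second residual
  have e2 : Ls ph - adjoint A (A (J yh) - zd) = Ls (ph - p) - G (yh - y) := by
    simp only [hG, comp_apply, map_sub, hadjeq]
    abel
  have hT2 : ‖Ls ph - adjoint A (A (J yh) - zd)‖ ≤ S * (a1 + a2 + a3) := by
    rw [e2]
    have h1 : ‖Ls (ph - p) - G (yh - y)‖ ≤ ‖Ls (ph - p)‖ + ‖G (yh - y)‖ := norm_sub_le _ _
    have h2 : ‖Ls (ph - p)‖ ≤ ‖Ls‖ * ‖ph - p‖ := Ls.le_opNorm _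
    have h3 : ‖G (yh - y)‖ ≤ ‖G‖ * ‖yh - y‖ := G.le_opNorm _
    rw [norm_sub_rev ph p, norm_sub_rev yh y] at *
    have h4 : ‖Ls‖ * a3 ≤ S * a3 := mul_le_mul_of_nonneg_right hLsS ha3n
    have h5 : ‖G‖ * a2 ≤ S * a2 := mul_le_mul_of_nonneg_right hGS ha2n
    have h6 : S * (a1 + a2 + a3) = S * a1 + S * a2 + S * a3 := by ring
    linarith
  -- third residual
  have hT3 : ‖Pi (Cinv (adjoint B (Js ph))) - uh‖ ≤ S * (a1 + a2 + a3) := by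
    have h1 : ‖Pi (Cinv (adjoint B (Js ph))) - uh‖ ≤
        ‖Pi (Cinv (adjoint B (Js ph))) - u‖ + ‖u - uh‖ := norm_sub_le_norm_sub_add_norm_sub _ _ _
    have h2 : ‖Pi (Cinv (adjoint B (Js ph))) - u‖ ≤ CPi * ‖H ph - H p‖ := by
      rw [hu]
      simpa [hH] using hPlip (Cinv (adjoint B (Js ph))) (Cinv (adjoint B (Js p)))
    have h3 : ‖H ph - H p‖ ≤ ‖H‖ * ‖ph - p‖ := by
      calc ‖H ph - H p‖ = ‖H (ph - p)‖ := by rw [map_sub]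
        _ ≤ ‖H‖ * ‖ph - p‖ := H.le_opNorm _
    rw [norm_sub_rev ph p] at h3
    have h4 : CPi * ‖H ph - H p‖ ≤ CPi * (‖H‖ * a3) := mul_le_mul_of_nonneg_left h3 hCPi.le
    have h5 : CPi * ‖H‖ * a3 ≤ S * a3 := mul_le_mul_of_nonneg_right hHS ha3n
    have h6 : (1:ℝ) * a1 ≤ S * a1 := mul_le_mul_of_nonneg_right h1S ha1n
    have h4' : CPi * (‖H‖ * a3) = CPi * ‖H‖ * a3 := by ring
    have h7 : S * (a1 + a2 + a3) = S * a1 + S * a2 + S * a3 := by ring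
    linarith
  -- combine
  have hR : 0 ≤ S * (a1 + a2 + a3) := by positivity
  have hn1 : 0 ≤ ‖L yh + B uh - f‖ := norm_nonneg _
  have hn2 : 0 ≤ ‖Ls ph - adjoint A (A (J yh) - zd)‖ := norm_nonneg _
  have hn3 : 0 ≤ ‖Pi (Cinv (adjoint B (Js ph))) - uh‖ := norm_nonneg _
  have hs1 : ‖L yh + B uh - f‖ ^ 2 ≤ (S * (a1 + a2 + a3)) ^ 2 := by
    exact pow_le_pow_left₀ hn1 hT1 2
  have hs2 : ‖Ls ph - adjoint A (A (J yh) - zd)‖ ^ 2 ≤ (S * (a1 + a2 + a3)) ^ 2 :=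
    pow_le_pow_left₀ hn2 hT2 2
  have hs3 : ‖Pi (Cinv (adjoint B (Js ph))) - uh‖ ^ 2 ≤ (S * (a1 + a2 + a3)) ^ 2 :=
    pow_le_pow_left₀ hn3 hT3 2
  have sq1 : (a1 + a2 + a3) ^ 2 ≤ 3 * (a1 ^ 2 + a2 ^ 2 + a3 ^ 2) := by
    nlinarith [sq_nonneg (a1 - a2), sq_nonneg (a2 - a3), sq_nonneg (a1 - a3)]
  have k : S ^ 2 * (a1 + a2 + a3) ^ 2 ≤ S ^ 2 * (3 * (a1 ^ 2 + a2 ^ 2 + a3 ^ 2)) :=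
    mul_le_mul_of_nonneg_left sq1 (sq_nonneg S)
  have e : (S * (a1 + a2 + a3)) ^ 2 = S ^ 2 * (a1 + a2 + a3) ^ 2 := by ring
  rw [e] at hs1 hs2 hs3
  have e2' : 9 * S ^ 2 * (a1 ^ 2 + a2 ^ 2 + a3 ^ 2) =
      3 * (S ^ 2 * (3 * (a1 ^ 2 + a2 ^ 2 + a3 ^ 2))) := by ring
  rw [e2']
  linarith
end

section
/- Efficiency of the a posteriori estimator (abstract form): Under the assumptions of the abstract framework with γ ≥ γ₀ so that the bilinear form a is coercive, let (u, y, p) solve the constrained optimality system, and for (u_h, y_h, p_h) ∈ X_ad × Y × Y⋆ set ũ_h = Π_{X_ad} C⁻¹ B* I⋆ p_h. Then ‖u − u_h‖² + ‖y − y_h‖²_Y + ‖p − p_h‖²_{Y⋆} ≤ c (‖L y_h + B u_h − f‖² + ‖L⋆ p_h − A*(A I y_h − z_d)‖² + ‖ũ_h − u_h‖²). -/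
open scoped RealInnerProductSpace
open ContinuousLinearMap

set_option maxHeartbeats 1000000 in
/-- Efficiency of the a posteriori estimator (abstract form): under the abstract framework
(boundedly invertible `L, Ls`, adjointness (A3) between `(L, J)` and `(Ls, Js)`, bounded
`A, B`, self-adjoint coercive `C`), if `(u, y, p)` solves the constrained optimality system
with `u = Π_{X_ad} C⁻¹ B* Js p`, then for any `(u_h, y_h, p_h) ∈ X_ad × Y × Y⋆`, with
`ũ_h = Pi (C⁻¹ B* Js p_h)`, the squared error is bounded by a constant times the estimator
`η² = ‖L y_h + B u_h − f‖² + ‖Ls p_h − A*(A J y_h − z_d)‖² + ‖ũ_h − u_h‖²`. -/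
theorem stmt14 {X Y Ys Z : Type*}
    [NormedAddCommGroup X] [InnerProductSpace ℝ X] [CompleteSpace X]
    [NormedAddCommGroup Y] [InnerProductSpace ℝ Y] [CompleteSpace Y]
    [NormedAddCommGroup Ys] [InnerProductSpace ℝ Ys] [CompleteSpace Ys]
    [NormedAddCommGroup Z] [InnerProductSpace ℝ Z] [CompleteSpace Z]
    (L : Y →L[ℝ] Z) (Ls : Ys →L[ℝ] Z) (J : Y →L[ℝ] Z) (Js : Ys →L[ℝ] Z)
    (A : Z →L[ℝ] Z) (B : X →L[ℝ] Z) (C : X →L[ℝ] X)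
    (CL : ℝ) (hCL : 0 < CL)
    (hLlow : ∀ y : Y, ‖y‖ ≤ CL * ‖L y‖) (hLsurj : Function.Surjective L)
    (hLslow : ∀ p : Ys, ‖p‖ ≤ CL * ‖Ls p‖) (hLssurj : Function.Surjective Ls)
    (hadj : ∀ (y : Y) (p : Ys), ⟪L y, Js p⟫ = ⟪J y, Ls p⟫)
    (hCsym : ∀ u w : X, ⟪C u, w⟫ = ⟪u, C w⟫)
    (κ : ℝ) (hκ : 0 < κ) (hCcoer : ∀ u : X, κ * ‖u‖ ^ 2 ≤ ⟪C u, u⟫)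
    (Xad : Set X) (hne : Xad.Nonempty) (hcl : IsClosed Xad) (hconv : Convex ℝ Xad)
    (Pi : X → X) (hPmem : ∀ w : X, Pi w ∈ Xad)
    (hPchar : ∀ w : X, ∀ v ∈ Xad, ⟪C (Pi w - w), Pi w - v⟫ ≤ 0)
    (Cinv : X →L[ℝ] X) (hCinv : ∀ x : X, C (Cinv x) = x)
    (f zd : Z) (u : X) (y : Y) (p : Ys) (huXad : u ∈ Xad)
    (hstate : L y + B u = f)
    (hadjeq : Ls p = adjoint A (A (J y) - zd))
    (hu : u = Pi (Cinv (adjoint B (Js p)))) :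
    ∃ c > (0 : ℝ), ∀ uh ∈ Xad, ∀ (yh : Y) (ph : Ys),
      ‖u - uh‖ ^ 2 + ‖y - yh‖ ^ 2 + ‖p - ph‖ ^ 2 ≤
      c * (‖L yh + B uh - f‖ ^ 2 + ‖Ls ph - adjoint A (A (J yh) - zd)‖ ^ 2 +
        ‖Pi (Cinv (adjoint B (Js ph))) - uh‖ ^ 2) := by
  classical
  obtain ⟨M, hMdef⟩ : ∃ m : ℝ, m = 1 + ‖A‖ + ‖B‖ + ‖J‖ + ‖Js‖ + CL := ⟨_, rfl⟩
  have hM : 1 ≤ M := by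
    simp only [hMdef]
    linarith [norm_nonneg A, norm_nonneg B, norm_nonneg J, norm_nonneg Js, hCL.le]
  have hM0 : (0:ℝ) ≤ M := by linarith
  have hAM : ‖A‖ ≤ M := by
    simp only [hMdef]
    linarith [norm_nonneg B, norm_nonneg J, norm_nonneg Js, hCL.le]
  have hBM : ‖B‖ ≤ M := by
    simp only [hMdef]
    linarith [norm_nonneg A, norm_nonneg J, norm_nonneg Js, hCL.le]
  have hJM : ‖J‖ ≤ M := by
    simp only [hMdef]
    linarith [norm_nonneg A, norm_nonneg B, norm_nonneg Js, hCL.le]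
  have hJsM : ‖Js‖ ≤ M := by
    simp only [hMdef]
    linarith [norm_nonneg A, norm_nonneg B, norm_nonneg J, hCL.le]
  have hCLM : CL ≤ M := by
    simp only [hMdef]
    linarith [norm_nonneg A, norm_nonneg B, norm_nonneg J, norm_nonneg Js]
  have hMpos : (0:ℝ) < M := by linarith
  obtain ⟨c1, hc1def⟩ : ∃ x : ℝ, x = 2*M^8 + M^3 := ⟨_, rfl⟩
  have hc1pos : 0 < c1 := by rw [hc1def]; positivity
  obtain ⟨C2, hC2def⟩ : ∃ x : ℝ, x = 2*κ*c1 + c1^2 := ⟨_, rfl⟩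
  have hC2pos : 0 < C2 := by
    rw [hC2def]
    have hx := mul_pos hκ hc1pos
    linarith only [hx, sq_nonneg c1]
  obtain ⟨K, hKdef⟩ : ∃ x : ℝ, x = (2*C2 + 2*κ^2) + 2*M^4*(κ^2 + C2) + 8*M^12*(κ^2 + C2) := ⟨_, rfl⟩
  have hκ2 : (0:ℝ) < κ^2 := pow_pos hκ 2
  have hKpos : 0 < K := by
    rw [hKdef]
    have h1 : (0:ℝ) ≤ 2*M^4*(κ^2 + C2) := by positivity
    have h2 : (0:ℝ) ≤ 8*M^12*(κ^2 + C2) := by positivity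
    linarith only [h1, h2, hC2pos, hκ2]
  refine ⟨3*K/κ^2, div_pos (by linarith) hκ2, ?_⟩
  intro uh huh yh ph
  obtain ⟨ut, hut⟩ : ∃ x, x = Pi (Cinv (adjoint B (Js ph))) := ⟨_, rfl⟩
  obtain ⟨r1, hr1⟩ : ∃ x, x = L yh + B uh - f := ⟨_, rfl⟩
  obtain ⟨r2, hr2⟩ : ∃ x, x = Ls ph - adjoint A (A (J yh) - zd) := ⟨_, rfl⟩
  obtain ⟨d, hdd⟩ : ∃ x, x = ut - uh := ⟨_, rfl⟩
  obtain ⟨eu, heu⟩ : ∃ x, x = u - ut := ⟨_, rfl⟩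
  obtain ⟨ey, hey⟩ : ∃ x, x = y - yh := ⟨_, rfl⟩
  obtain ⟨ep, hep⟩ : ∃ x, x = p - ph := ⟨_, rfl⟩
  rw [← hut, ← hdd, ← hey, ← hep, ← hr1, ← hr2]
  have hutX : ut ∈ Xad := hut ▸ hPmem _
  obtain ⟨ε, hεd⟩ : ∃ x : ℝ, x = ‖r1‖ + ‖r2‖ + ‖d‖ := ⟨_, rfl⟩
  have hε0 : (0:ℝ) ≤ ε := by rw [hεd]; positivity
  -- residual identities
  have hLy : L y = f - B u := by rw [← hstate]; abel
  have hLey : L ey = -r1 - B d - B eu := by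
    simp only [hey, hr1, hdd, heu, map_sub]
    rw [hLy]; abel
  have hLsep : Ls ep = -r2 + adjoint A (A (J ey)) := by
    simp only [hep, hr2, hey, map_sub, hadjeq]
    abel
  -- sign condition
  have hq1 : ⟪C u - adjoint B (Js p), u - ut⟫ ≤ 0 := by
    have h := hPchar (Cinv (adjoint B (Js p))) ut hutX
    rw [← hu] at h
    rwa [map_sub, hCinv] at h
  have hq2 : ⟪C ut - adjoint B (Js ph), ut - u⟫ ≤ 0 := by
    have h := hPchar (Cinv (adjoint B (Js ph))) u huXad
    rw [← hut] at h
    rwa [map_sub, hCinv] at h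
  have hkey : ⟪C eu, eu⟫ ≤ ⟪adjoint B (Js ep), eu⟫ := by
    have hq2' : 0 ≤ ⟪C ut - adjoint B (Js ph), u - ut⟫ := by
      have e2 : ⟪C ut - adjoint B (Js ph), ut - u⟫
          = -⟪C ut - adjoint B (Js ph), u - ut⟫ := by
        rw [show ut - u = -(u - ut) by abel, inner_neg_right]
      rw [e2] at hq2; linarith
    have expand : ⟪C eu, eu⟫ - ⟪adjoint B (Js ep), eu⟫
        = ⟪C u - adjoint B (Js p), u - ut⟫ - ⟪C ut - adjoint B (Js ph), u - ut⟫ := by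
      rw [← inner_sub_left, ← inner_sub_left]
      simp only [heu, hep, map_sub]
      congr 1
      abel
    linarith
  -- key inequality
  have hBeu : B eu = -r1 - B d - L ey := by rw [hLey]; abel
  have hip1 : ⟪adjoint B (Js ep), eu⟫ = ⟪Js ep, B eu⟫ := by
    rw [ContinuousLinearMap.adjoint_inner_left]
  have hip2 : ⟪Js ep, L ey⟫ = -⟪J ey, r2⟫ + ‖A (J ey)‖^2 := by
    rw [real_inner_comm, hadj, hLsep, inner_add_right, inner_neg_right,
      ContinuousLinearMap.adjoint_inner_right, real_inner_self_eq_norm_sq]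
  have hsplit : ⟪Js ep, B eu⟫ = ⟪Js ep, -r1 - B d⟫ - ⟪Js ep, L ey⟫ := by
    rw [hBeu, inner_sub_right]
  have hipa : ⟪Js ep, -r1 - B d⟫ ≤ ‖Js ep‖ * (‖r1‖ + ‖B d‖) := by
    have h := real_inner_le_norm (Js ep) (-r1 - B d)
    have hn : ‖-r1 - B d‖ ≤ ‖r1‖ + ‖B d‖ := by
      calc ‖-r1 - B d‖ ≤ ‖-r1‖ + ‖B d‖ := norm_sub_le _ _
        _ = ‖r1‖ + ‖B d‖ := by rw [norm_neg]
    exact le_trans h (mul_le_mul_of_nonneg_left hn (norm_nonneg _))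
  have hipb : ⟪J ey, r2⟫ ≤ ‖J ey‖ * ‖r2‖ := real_inner_le_norm _ _
  have h3 : κ * ‖eu‖^2 ≤ ‖Js ep‖ * (‖r1‖ + ‖B d‖) + ‖J ey‖ * ‖r2‖ := by
    have hc := hCcoer eu
    have hsum : ⟪adjoint B (Js ep), eu⟫
        = ⟪Js ep, -r1 - B d⟫ + ⟪J ey, r2⟫ - ‖A (J ey)‖^2 := by
      rw [hip1, hsplit, hip2]; ring
    linarith only [hc, hkey, hsum, hipa, hipb, sq_nonneg ‖A (J ey)‖]
  -- operator norm bounds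
  have hJsb : ‖Js ep‖ ≤ M * ‖ep‖ :=
    le_trans (Js.le_opNorm ep) (mul_le_mul_of_nonneg_right hJsM (norm_nonneg _))
  have hBdb : ‖B d‖ ≤ M * ‖d‖ :=
    le_trans (B.le_opNorm d) (mul_le_mul_of_nonneg_right hBM (norm_nonneg _))
  have hJeb : ‖J ey‖ ≤ M * ‖ey‖ :=
    le_trans (J.le_opNorm ey) (mul_le_mul_of_nonneg_right hJM (norm_nonneg _))
  have hBeub : ‖B eu‖ ≤ M * ‖eu‖ :=
    le_trans (B.le_opNorm eu) (mul_le_mul_of_nonneg_right hBM (norm_nonneg _))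
  -- error bounds for state and adjoint variables
  have hyb : ‖ey‖ ≤ M^2 * (ε + ‖eu‖) := by
    have h0 := hLlow ey
    have h1 : ‖L ey‖ ≤ ‖r1‖ + M*‖d‖ + M*‖eu‖ := by
      rw [hLey]
      calc ‖-r1 - B d - B eu‖ ≤ ‖-r1 - B d‖ + ‖B eu‖ := norm_sub_le _ _
        _ ≤ ‖-r1‖ + ‖B d‖ + ‖B eu‖ := by linarith [norm_sub_le (-r1) (B d)]
        _ ≤ ‖r1‖ + M*‖d‖ + M*‖eu‖ := by
            rw [norm_neg]; linarith [hBdb, hBeub]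
    have h2 : ‖ey‖ ≤ CL * (‖r1‖ + M*‖d‖ + M*‖eu‖) :=
      le_trans h0 (mul_le_mul_of_nonneg_left h1 hCL.le)
    have h4 : ‖r1‖ + M*‖d‖ + M*‖eu‖ ≤ M*(ε + ‖eu‖) := by
      rw [hεd]
      linarith only [mul_nonneg (by linarith : (0:ℝ) ≤ M - 1) (norm_nonneg r1),
        mul_nonneg hM0 (norm_nonneg r2)]
    have hbr : (0:ℝ) ≤ ‖r1‖ + M*‖d‖ + M*‖eu‖ := by
      have := mul_nonneg hM0 (norm_nonneg d)
      have := mul_nonneg hM0 (norm_nonneg eu)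
      linarith [norm_nonneg r1]
    have h5 : ‖ey‖ ≤ M * (M*(ε + ‖eu‖)) :=
      le_trans h2 (mul_le_mul hCLM h4 hbr hM0)
    have h6 : M * (M*(ε + ‖eu‖)) = M^2 * (ε + ‖eu‖) := by ring
    linarith
  have hpb : ‖ep‖ ≤ 2*M^6 * (ε + ‖eu‖) := by
    have h0 := hLslow ep
    have haj : ‖adjoint A (A (J ey))‖ ≤ M*(M*(M*‖ey‖)) := by
      calc ‖adjoint A (A (J ey))‖ ≤ ‖adjoint A‖ * ‖A (J ey)‖ :=
            (adjoint A).le_opNorm _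
        _ = ‖A‖ * ‖A (J ey)‖ := by
            rw [LinearIsometryEquiv.norm_map (adjoint : (Z →L[ℝ] Z) ≃ₗᵢ[ℝ] (Z →L[ℝ] Z)) A]
        _ ≤ M * (M*(M*‖ey‖)) := by
            refine mul_le_mul hAM ?_ (norm_nonneg _) hM0
            refine le_trans (A.le_opNorm _) (mul_le_mul hAM ?_ (norm_nonneg _) hM0)
            exact le_trans (J.le_opNorm _) (mul_le_mul_of_nonneg_right hJM (norm_nonneg _))
    have h1 : ‖Ls ep‖ ≤ ‖r2‖ + M^3*‖ey‖ := by
      rw [hLsep]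
      calc ‖-r2 + adjoint A (A (J ey))‖ ≤ ‖-r2‖ + ‖adjoint A (A (J ey))‖ :=
            norm_add_le _ _
        _ ≤ ‖r2‖ + M^3*‖ey‖ := by
            rw [norm_neg]
            have : M*(M*(M*‖ey‖)) = M^3*‖ey‖ := by ring
            linarith
    have h2 : ‖ep‖ ≤ CL * (‖r2‖ + M^3*‖ey‖) :=
      le_trans h0 (mul_le_mul_of_nonneg_left h1 hCL.le)
    have p1 : CL*‖r2‖ ≤ M*ε := by
      refine mul_le_mul hCLM ?_ (norm_nonneg _) hM0
      rw [hεd]; linarith [norm_nonneg r1, norm_nonneg d]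
    have p2 : CL*(M^3*‖ey‖) ≤ M*(M^3*(M^2*(ε + ‖eu‖))) := by
      refine mul_le_mul hCLM ?_ (mul_nonneg (by positivity) (norm_nonneg _)) hM0
      exact mul_le_mul_of_nonneg_left hyb (by positivity)
    have hM6 : M ≤ M^6 := le_self_pow₀ hM (by norm_num)
    have p3 : M*ε ≤ M^6*ε := mul_le_mul_of_nonneg_right hM6 hε0
    have p4 : M*(M^3*(M^2*(ε + ‖eu‖))) = M^6*(ε + ‖eu‖) := by ring
    have p5 : (0:ℝ) ≤ M^6*‖eu‖ := mul_nonneg (by positivity) (norm_nonneg _)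
    linarith only [h2, p1, p2, p3, p4, p5]
  -- combine into the quadratic inequality
  have hT1 : ‖Js ep‖ * (‖r1‖ + ‖B d‖) ≤ 2*M^8*((ε + ‖eu‖)*ε) := by
    have q1 : ‖Js ep‖ ≤ M*(2*M^6*(ε + ‖eu‖)) :=
      le_trans hJsb (mul_le_mul_of_nonneg_left hpb hM0)
    have q2 : ‖r1‖ + ‖B d‖ ≤ M*ε := by
      rw [hεd]
      linarith only [mul_nonneg (by linarith : (0:ℝ) ≤ M - 1) (norm_nonneg r1),
        mul_nonneg hM0 (norm_nonneg r2), hBdb]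
    have hbn : (0:ℝ) ≤ ‖r1‖ + ‖B d‖ := by positivity
    have hqn : (0:ℝ) ≤ M*(2*M^6*(ε + ‖eu‖)) := by
      have : (0:ℝ) ≤ ε + ‖eu‖ := by positivity
      positivity
    calc ‖Js ep‖ * (‖r1‖ + ‖B d‖) ≤ (M*(2*M^6*(ε + ‖eu‖))) * (M*ε) :=
          mul_le_mul q1 q2 hbn hqn
      _ = 2*M^8*((ε + ‖eu‖)*ε) := by ring
  have hT2 : ‖J ey‖ * ‖r2‖ ≤ M^3*((ε + ‖eu‖)*ε) := by
    have q1 : ‖J ey‖ ≤ M*(M^2*(ε + ‖eu‖)) :=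
      le_trans hJeb (mul_le_mul_of_nonneg_left hyb hM0)
    have q2 : ‖r2‖ ≤ ε := by rw [hεd]; linarith [norm_nonneg r1, norm_nonneg d]
    have hqn : (0:ℝ) ≤ M*(M^2*(ε + ‖eu‖)) := by
      have : (0:ℝ) ≤ ε + ‖eu‖ := by positivity
      positivity
    calc ‖J ey‖ * ‖r2‖ ≤ (M*(M^2*(ε + ‖eu‖))) * ε :=
          mul_le_mul q1 q2 (norm_nonneg _) hqn
      _ = M^3*((ε + ‖eu‖)*ε) := by ring
  have hEineq : κ*‖eu‖^2 ≤ c1*((ε + ‖eu‖)*ε) := by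
    have he : c1*((ε + ‖eu‖)*ε) = 2*M^8*((ε + ‖eu‖)*ε) + M^3*((ε + ‖eu‖)*ε) := by
      rw [hc1def]; ring
    linarith only [h3, hT1, hT2, he]
  have hE2 : κ^2*‖eu‖^2 ≤ C2*ε^2 := by
    have h2k := mul_le_mul_of_nonneg_left hEineq (by linarith : (0:ℝ) ≤ 2*κ)
    rw [hC2def]
    linarith only [h2k, sq_nonneg (κ*‖eu‖ - c1*ε)]
  -- final assembly
  have htri : ‖u - uh‖ ≤ ‖eu‖ + ‖d‖ := by
    have hsplit2 : u - uh = eu + d := by rw [heu, hdd]; abel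
    rw [hsplit2]; exact norm_add_le _ _
  have hdε : ‖d‖ ≤ ε := by rw [hεd]; linarith [norm_nonneg r1, norm_nonneg r2]
  have sq1 : ‖u - uh‖^2 ≤ (‖eu‖ + ‖d‖)^2 := pow_le_pow_left₀ (norm_nonneg _) htri 2
  have sq2 : ‖ey‖^2 ≤ (M^2*(ε + ‖eu‖))^2 := pow_le_pow_left₀ (norm_nonneg _) hyb 2
  have sq3 : ‖ep‖^2 ≤ (2*M^6*(ε + ‖eu‖))^2 := pow_le_pow_left₀ (norm_nonneg _) hpb 2
  have sqd : ‖d‖^2 ≤ ε^2 := pow_le_pow_left₀ (norm_nonneg _) hdε 2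
  obtain ⟨S, hSdef⟩ : ∃ x : ℝ, x = ‖r1‖^2 + ‖r2‖^2 + ‖d‖^2 := ⟨_, rfl⟩
  rw [← hSdef]
  have hεS : ε^2 ≤ 3*S := by
    rw [hεd, hSdef]
    linarith only [sq_nonneg (‖r1‖-‖r2‖), sq_nonneg (‖r1‖-‖d‖), sq_nonneg (‖r2‖-‖d‖)]
  have b1 : κ^2*‖u - uh‖^2 ≤ 2*C2*ε^2 + 2*κ^2*ε^2 := by
    have b1a := mul_le_mul_of_nonneg_left sq1 hκ2.le
    have b1b := mul_le_mul_of_nonneg_left sqd hκ2.le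
    linarith only [b1a, b1b, hE2, mul_nonneg hκ2.le (sq_nonneg (‖eu‖ - ‖d‖))]
  have b2 : κ^2*‖ey‖^2 ≤ 2*M^4*(κ^2 + C2)*ε^2 := by
    have b2a := mul_le_mul_of_nonneg_left sq2 hκ2.le
    have b2b := mul_le_mul_of_nonneg_left hE2 (by positivity : (0:ℝ) ≤ 2*M^4)
    linarith only [b2a, b2b, mul_nonneg (mul_nonneg (by positivity : (0:ℝ) ≤ M^4) hκ2.le)
      (sq_nonneg (ε - ‖eu‖))]
  have b3 : κ^2*‖ep‖^2 ≤ 8*M^12*(κ^2 + C2)*ε^2 := by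
    have b3a := mul_le_mul_of_nonneg_left sq3 hκ2.le
    have b3b := mul_le_mul_of_nonneg_left hE2 (by positivity : (0:ℝ) ≤ 8*M^12)
    linarith only [b3a, b3b, mul_nonneg (mul_nonneg (by positivity : (0:ℝ) ≤ 4*M^12) hκ2.le)
      (sq_nonneg (ε - ‖eu‖))]
  have hKε : (2*C2 + 2*κ^2)*ε^2 + 2*M^4*(κ^2 + C2)*ε^2 + 8*M^12*(κ^2 + C2)*ε^2
      = K*ε^2 := by rw [hKdef]; ring
  have hKS : K*ε^2 ≤ K*(3*S) := mul_le_mul_of_nonneg_left hεS hKpos.le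
  have main : κ^2*(‖u - uh‖^2 + ‖ey‖^2 + ‖ep‖^2) ≤ 3*K*S := by
    linarith only [b1, b2, b3, hKε, hKS]
  rw [div_mul_eq_mul_div, le_div_iff₀ hκ2]
  linarith only [main]
end

section
/- Norm equivalence for the unconstrained least-squares functional: Under the abstract framework with X_ad a closed subspace and Π_ad the C-orthogonal projection onto X_ad, define G(y, p; 0, 0) = ‖L y + B Π_ad C⁻¹ B* I⋆ p‖² + ‖L⋆ p − A*A I y‖². Then there are constants c₁, c₂ > 0 with c₁(‖y‖²_Y + ‖p‖²_{Y⋆}) ≤ G(y, p; 0, 0) ≤ c₂(‖y‖²_Y + ‖p‖²_{Y⋆}) for all (y, p) ∈ Y × Y⋆. -/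
open scoped RealInnerProductSpace
open ContinuousLinearMap

set_option maxHeartbeats 1000000

private lemma sq_le_imp' {a b : ℝ} (ha : 0 ≤ a) (hb : 0 ≤ b) (h : a ^ 2 ≤ b ^ 2) : a ≤ b := by
  have := Real.sqrt_le_sqrt h
  rwa [Real.sqrt_sq ha, Real.sqrt_sq hb] at this

/-- Norm equivalence for the unconstrained least-squares functional: with `X_ad` a closed
subspace of `X` and `Pad` the `C`-orthogonal projection onto `X_ad`, the homogeneous
least-squares functional
`G(y, p; 0, 0) = ‖L y + B Pad C⁻¹ B* Js p‖² + ‖Ls p − A*A J y‖²`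
is equivalent to the squared product norm `‖y‖²_Y + ‖p‖²_{Y⋆}`. -/
theorem stmt15 {X Y Ys Z : Type*}
    [NormedAddCommGroup X] [InnerProductSpace ℝ X] [CompleteSpace X]
    [NormedAddCommGroup Y] [InnerProductSpace ℝ Y] [CompleteSpace Y]
    [NormedAddCommGroup Ys] [InnerProductSpace ℝ Ys] [CompleteSpace Ys]
    [NormedAddCommGroup Z] [InnerProductSpace ℝ Z] [CompleteSpace Z]
    (L : Y →L[ℝ] Z) (Ls : Ys →L[ℝ] Z) (J : Y →L[ℝ] Z) (Js : Ys →L[ℝ] Z)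
    (A : Z →L[ℝ] Z) (B : X →L[ℝ] Z) (C : X →L[ℝ] X)
    (CL : ℝ) (hCL : 0 < CL)
    (hLlow : ∀ y : Y, ‖y‖ ≤ CL * ‖L y‖) (hLsurj : Function.Surjective L)
    (hLslow : ∀ p : Ys, ‖p‖ ≤ CL * ‖Ls p‖) (hLssurj : Function.Surjective Ls)
    (hadj : ∀ (y : Y) (p : Ys), ⟪L y, Js p⟫ = ⟪J y, Ls p⟫)
    (hCsym : ∀ u w : X, ⟪C u, w⟫ = ⟪u, C w⟫)
    (κ : ℝ) (hκ : 0 < κ) (hCcoer : ∀ u : X, κ * ‖u‖ ^ 2 ≤ ⟪C u, u⟫)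
    (Xad : Submodule ℝ X) (hXcl : IsClosed (Xad : Set X))
    (Pad : X →L[ℝ] X) (hPmem : ∀ w : X, Pad w ∈ Xad)
    (hPchar : ∀ w : X, ∀ v ∈ Xad, ⟪C (Pad w - w), v⟫ = 0)
    (Cinv : X →L[ℝ] X) (hCinv : ∀ x : X, C (Cinv x) = x) :
    ∃ c₁ > (0 : ℝ), ∃ c₂ > (0 : ℝ), ∀ (y : Y) (p : Ys),
      c₁ * (‖y‖ ^ 2 + ‖p‖ ^ 2) ≤
        ‖L y + B (Pad (Cinv (adjoint B (Js p))))‖ ^ 2 + ‖Ls p - adjoint A (A (J y))‖ ^ 2 ∧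
      ‖L y + B (Pad (Cinv (adjoint B (Js p))))‖ ^ 2 + ‖Ls p - adjoint A (A (J y))‖ ^ 2 ≤
        c₂ * (‖y‖ ^ 2 + ‖p‖ ^ 2) := by
  classical
  -- constants
  set M : ℝ := max ‖J‖ ‖Js‖ with hMdef
  have hM0 : (0:ℝ) ≤ M := le_trans (norm_nonneg J) (le_max_left _ _)
  have hJM : ‖J‖ ≤ M := le_max_left _ _
  have hJsM : ‖Js‖ ≤ M := le_max_right _ _
  set NB : ℝ := ‖B‖ with hNBdef
  set NA : ℝ := ‖adjoint A‖ with hNAdef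
  have hNB0 : (0:ℝ) ≤ NB := norm_nonneg _
  have hNA0 : (0:ℝ) ≤ NA := norm_nonneg _
  set K1 : ℝ := CL ^ 2 * NB ^ 2 * M / κ with hK1def
  set K2 : ℝ := CL ^ 2 * NA ^ 2 * M with hK2def
  have hK10 : (0:ℝ) ≤ K1 := by
    rw [hK1def]; positivity
  have hK20 : (0:ℝ) ≤ K2 := by rw [hK2def]; positivity
  set D : ℝ := (8 / 7) * (CL + 4 * K1 + 4 * K2) with hDdef
  have hD0 : 0 < D := by rw [hDdef]; nlinarith
  set N2 : ℝ := ‖B‖ * (‖Pad‖ * (‖Cinv‖ * (‖adjoint B‖ * ‖Js‖))) with hN2def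
  set N4 : ℝ := ‖adjoint A‖ * (‖A‖ * ‖J‖) with hN4def
  have hN20 : (0:ℝ) ≤ N2 := by rw [hN2def]; positivity
  have hN40 : (0:ℝ) ≤ N4 := by rw [hN4def]; positivity
  clear_value M NB NA K1 K2 D N2 N4
  have hD2 : (0:ℝ) < 2 * D ^ 2 := by nlinarith [mul_pos hD0 hD0]
  have hDne : D ≠ 0 := ne_of_gt hD0
  refine ⟨1 / (2 * D ^ 2), div_pos one_pos hD2,
    2 * (‖L‖ ^ 2 + N2 ^ 2 + ‖Ls‖ ^ 2 + N4 ^ 2) + 1, by positivity, ?_⟩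
  intro y p
  set u : X := Pad (Cinv (adjoint B (Js p))) with hudef
  set r1 : Z := L y + B u with hr1def
  set r2 : Z := Ls p - adjoint A (A (J y)) with hr2def
  set ρ : ℝ := ‖r1‖ + ‖r2‖ with hρdef
  set t : ℝ := ‖y‖ + ‖p‖ with htdef
  have hρ0 : (0:ℝ) ≤ ρ := by rw [hρdef]; positivity
  have ht0 : (0:ℝ) ≤ t := by rw [htdef]; positivity
  clear_value ρ t
  constructor
  · -- lower bound
    -- the key identity
    have hw : C (Cinv (adjoint B (Js p))) = adjoint B (Js p) := hCinv _
    have hchar := hPchar (Cinv (adjoint B (Js p))) u (hPmem _)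
    rw [map_sub, inner_sub_left] at hchar
    have hBu : ⟪B u, Js p⟫ = ⟪C u, u⟫ := by
      have h1 : ⟪B u, Js p⟫ = ⟪u, adjoint B (Js p)⟫ := (adjoint_inner_right B u (Js p)).symm
      rw [h1, ← hw, real_inner_comm]
      linarith
    have hAy : ⟪adjoint A (A (J y)), J y⟫ = ‖A (J y)‖ ^ 2 := by
      rw [adjoint_inner_left]
      exact real_inner_self_eq_norm_sq _
    have key : ⟪C u, u⟫ + ‖A (J y)‖ ^ 2 = ⟪r1, Js p⟫ - ⟪r2, J y⟫ := by
      rw [hr1def, hr2def, inner_add_left, inner_sub_left, hBu, hAy, hadj y p,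
        real_inner_comm (J y) (Ls p)]
      ring
    -- bound the right-hand side of the key identity
    have e1 : ⟪r1, Js p⟫ ≤ ‖r1‖ * (‖Js‖ * ‖p‖) :=
      le_trans (real_inner_le_norm _ _)
        (mul_le_mul_of_nonneg_left (Js.le_opNorm p) (norm_nonneg r1))
    have e2 : -⟪r2, J y⟫ ≤ ‖r2‖ * (‖J‖ * ‖y‖) := by
      have h1 : |⟪r2, J y⟫| ≤ ‖r2‖ * ‖J y‖ := abs_real_inner_le_norm _ _
      have h2 : ‖r2‖ * ‖J y‖ ≤ ‖r2‖ * (‖J‖ * ‖y‖) :=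
        mul_le_mul_of_nonneg_left (J.le_opNorm y) (norm_nonneg r2)
      have := neg_abs_le (⟪r2, J y⟫)
      linarith
    have hS : ⟪C u, u⟫ + ‖A (J y)‖ ^ 2 ≤ M * ρ * t := by
      have h1 : ‖r1‖ * (‖Js‖ * ‖p‖) ≤ M * (‖r1‖ * ‖p‖) := by
        calc ‖r1‖ * (‖Js‖ * ‖p‖) ≤ ‖r1‖ * (M * ‖p‖) :=
              mul_le_mul_of_nonneg_left
                (mul_le_mul_of_nonneg_right hJsM (norm_nonneg p)) (norm_nonneg r1)
          _ = M * (‖r1‖ * ‖p‖) := by ring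
      have h2 : ‖r2‖ * (‖J‖ * ‖y‖) ≤ M * (‖r2‖ * ‖y‖) := by
        calc ‖r2‖ * (‖J‖ * ‖y‖) ≤ ‖r2‖ * (M * ‖y‖) :=
              mul_le_mul_of_nonneg_left
                (mul_le_mul_of_nonneg_right hJM (norm_nonneg y)) (norm_nonneg r2)
          _ = M * (‖r2‖ * ‖y‖) := by ring
      have h3 : M * (‖r1‖ * ‖p‖) + M * (‖r2‖ * ‖y‖) ≤ M * ρ * t := by
        have e1 : (0:ℝ) ≤ M * (‖r1‖ * ‖y‖) :=
          mul_nonneg hM0 (mul_nonneg (norm_nonneg r1) (norm_nonneg y))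
        have e2 : (0:ℝ) ≤ M * (‖r2‖ * ‖p‖) :=
          mul_nonneg hM0 (mul_nonneg (norm_nonneg r2) (norm_nonneg p))
        have e3 : M * ρ * t = M * (‖r1‖ * ‖p‖) + M * (‖r2‖ * ‖y‖)
            + M * (‖r1‖ * ‖y‖) + M * (‖r2‖ * ‖p‖) := by
          rw [hρdef, htdef]; ring
        linarith
      linarith
    have hCu0 : (0:ℝ) ≤ ⟪C u, u⟫ :=
      le_trans (mul_nonneg hκ.le (sq_nonneg _)) (hCcoer u)
    have hu2 : κ * ‖u‖ ^ 2 ≤ M * ρ * t := by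
      have h1 := hCcoer u
      have h2 : (0:ℝ) ≤ ‖A (J y)‖ ^ 2 := sq_nonneg _
      linarith
    have hA2 : ‖A (J y)‖ ^ 2 ≤ M * ρ * t := by linarith
    -- bound ‖y‖ and ‖p‖ by residuals
    have hLy : L y = r1 - B u := by rw [hr1def]; abel
    have ha : ‖y‖ ≤ CL * (‖r1‖ + NB * ‖u‖) := by
      refine le_trans (hLlow y) (mul_le_mul_of_nonneg_left ?_ hCL.le)
      rw [hLy]
      exact le_trans (norm_sub_le _ _) (by
        have := B.le_opNorm u
        rw [hNBdef]; linarith)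
    have hLsp : Ls p = r2 + adjoint A (A (J y)) := by rw [hr2def]; abel
    have hb : ‖p‖ ≤ CL * (‖r2‖ + NA * ‖A (J y)‖) := by
      refine le_trans (hLslow p) (mul_le_mul_of_nonneg_left ?_ hCL.le)
      rw [hLsp]
      exact le_trans (norm_add_le _ _) (by
        have := (adjoint A).le_opNorm (A (J y))
        rw [hNAdef]; linarith)
    -- Young's inequality steps
    have step1 : CL * NB * ‖u‖ ≤ 4 * K1 * ρ + t / 16 := by
      have ha2 : (CL * NB * ‖u‖) ^ 2 ≤ K1 * ρ * t := by
        have hmul : κ * (K1 * ρ * t) = CL ^ 2 * NB ^ 2 * (M * ρ * t) := by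
          rw [hK1def]; field_simp
        have h : κ * ((CL * NB * ‖u‖) ^ 2) ≤ κ * (K1 * ρ * t) := by
          rw [hmul]
          calc κ * ((CL * NB * ‖u‖) ^ 2) = CL ^ 2 * NB ^ 2 * (κ * ‖u‖ ^ 2) := by ring
            _ ≤ CL ^ 2 * NB ^ 2 * (M * ρ * t) :=
              mul_le_mul_of_nonneg_left hu2 (by positivity)
        exact le_of_mul_le_mul_left h hκ
      refine sq_le_imp' (mul_nonneg (mul_nonneg hCL.le hNB0) (norm_nonneg _)) ?_ ?_
      · have h1 := mul_nonneg (mul_nonneg hK10 hρ0) ht0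
        have h2 := mul_nonneg hK10 hρ0
        linarith
      · nlinarith [sq_nonneg (4 * K1 * ρ - t / 16)]
    have step2 : CL * NA * ‖A (J y)‖ ≤ 4 * K2 * ρ + t / 16 := by
      have ha2 : (CL * NA * ‖A (J y)‖) ^ 2 ≤ K2 * ρ * t := by
        have : (CL * NA * ‖A (J y)‖) ^ 2 = CL ^ 2 * NA ^ 2 * ‖A (J y)‖ ^ 2 := by ring
        rw [this, hK2def]
        calc CL ^ 2 * NA ^ 2 * ‖A (J y)‖ ^ 2 ≤ CL ^ 2 * NA ^ 2 * (M * ρ * t) :=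
              mul_le_mul_of_nonneg_left hA2 (by positivity)
          _ = CL ^ 2 * NA ^ 2 * M * ρ * t := by ring
      refine sq_le_imp' (mul_nonneg (mul_nonneg hCL.le hNA0) (norm_nonneg _)) ?_ ?_
      · have h2 := mul_nonneg hK20 hρ0
        linarith
      · nlinarith [sq_nonneg (4 * K2 * ρ - t / 16)]
    have ht : t ≤ D * ρ := by
      have h : t ≤ CL * ρ + CL * NB * ‖u‖ + CL * NA * ‖A (J y)‖ := by
        rw [htdef, hρdef]
        linarith [ha, hb]
      rw [hDdef]
      linarith
    -- combine
    have h1 : ‖y‖ ^ 2 + ‖p‖ ^ 2 ≤ t ^ 2 := by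
      rw [htdef]
      have e : (‖y‖ + ‖p‖) ^ 2 = ‖y‖ ^ 2 + 2 * (‖y‖ * ‖p‖) + ‖p‖ ^ 2 := by ring
      linarith [e, mul_nonneg (norm_nonneg y) (norm_nonneg p)]
    have h2 : t ^ 2 ≤ D ^ 2 * ρ ^ 2 := by
      have := pow_le_pow_left₀ ht0 ht 2
      have e : (D * ρ) ^ 2 = D ^ 2 * ρ ^ 2 := by ring
      linarith
    have h3 : ρ ^ 2 ≤ 2 * (‖r1‖ ^ 2 + ‖r2‖ ^ 2) := by
      rw [hρdef]
      have e : (‖r1‖ + ‖r2‖) ^ 2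
          = 2 * (‖r1‖ ^ 2 + ‖r2‖ ^ 2) - (‖r1‖ - ‖r2‖) ^ 2 := by ring
      linarith [e, sq_nonneg (‖r1‖ - ‖r2‖)]
    have h4 : ‖y‖ ^ 2 + ‖p‖ ^ 2 ≤ 2 * D ^ 2 * (‖r1‖ ^ 2 + ‖r2‖ ^ 2) := by
      have h5 := mul_le_mul_of_nonneg_left h3 (sq_nonneg D)
      linarith
    calc 1 / (2 * D ^ 2) * (‖y‖ ^ 2 + ‖p‖ ^ 2)
        ≤ 1 / (2 * D ^ 2) * (2 * D ^ 2 * (‖r1‖ ^ 2 + ‖r2‖ ^ 2)) :=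
          mul_le_mul_of_nonneg_left h4 (by positivity)
      _ = ‖r1‖ ^ 2 + ‖r2‖ ^ 2 := by
          field_simp
  · -- upper bound
    have hur : ‖u‖ ≤ ‖Pad‖ * (‖Cinv‖ * (‖adjoint B‖ * (‖Js‖ * ‖p‖))) := by
      rw [hudef]
      calc ‖Pad (Cinv (adjoint B (Js p)))‖ ≤ ‖Pad‖ * ‖Cinv (adjoint B (Js p))‖ :=
            Pad.le_opNorm _
        _ ≤ ‖Pad‖ * (‖Cinv‖ * ‖adjoint B (Js p)‖) :=
            mul_le_mul_of_nonneg_left (Cinv.le_opNorm _) (norm_nonneg _)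
        _ ≤ ‖Pad‖ * (‖Cinv‖ * (‖adjoint B‖ * ‖Js p‖)) := by
            refine mul_le_mul_of_nonneg_left ?_ (norm_nonneg _)
            exact mul_le_mul_of_nonneg_left ((adjoint B).le_opNorm _) (norm_nonneg _)
        _ ≤ ‖Pad‖ * (‖Cinv‖ * (‖adjoint B‖ * (‖Js‖ * ‖p‖))) := by
            refine mul_le_mul_of_nonneg_left ?_ (norm_nonneg _)
            refine mul_le_mul_of_nonneg_left ?_ (norm_nonneg _)
            exact mul_le_mul_of_nonneg_left (Js.le_opNorm _) (norm_nonneg _)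
    have hb1 : ‖r1‖ ≤ ‖L‖ * ‖y‖ + N2 * ‖p‖ := by
      rw [hr1def]
      refine le_trans (norm_add_le _ _) ?_
      have h1 : ‖B u‖ ≤ ‖B‖ * ‖u‖ := B.le_opNorm u
      have h2 : ‖B‖ * ‖u‖ ≤ N2 * ‖p‖ := by
        rw [hN2def]
        nlinarith [mul_le_mul_of_nonneg_left hur (norm_nonneg B)]
      have h3 := L.le_opNorm y
      linarith
    have hb2 : ‖r2‖ ≤ ‖Ls‖ * ‖p‖ + N4 * ‖y‖ := by
      rw [hr2def]
      refine le_trans (norm_sub_le _ _) ?_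
      have h1 : ‖adjoint A (A (J y))‖ ≤ ‖adjoint A‖ * (‖A‖ * (‖J‖ * ‖y‖)) := by
        calc ‖adjoint A (A (J y))‖ ≤ ‖adjoint A‖ * ‖A (J y)‖ := (adjoint A).le_opNorm _
          _ ≤ ‖adjoint A‖ * (‖A‖ * ‖J y‖) :=
              mul_le_mul_of_nonneg_left (A.le_opNorm _) (norm_nonneg _)
          _ ≤ ‖adjoint A‖ * (‖A‖ * (‖J‖ * ‖y‖)) := by
              refine mul_le_mul_of_nonneg_left ?_ (norm_nonneg _)
              exact mul_le_mul_of_nonneg_left (J.le_opNorm _) (norm_nonneg _)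
      have h2 : ‖adjoint A‖ * (‖A‖ * (‖J‖ * ‖y‖)) = N4 * ‖y‖ := by rw [hN4def]; ring
      have h3 := Ls.le_opNorm p
      linarith
    have hsq1 : ‖r1‖ ^ 2 ≤ 2 * ‖L‖ ^ 2 * ‖y‖ ^ 2 + 2 * N2 ^ 2 * ‖p‖ ^ 2 := by
      have e : (‖L‖ * ‖y‖ + N2 * ‖p‖) ^ 2
          = 2 * ‖L‖ ^ 2 * ‖y‖ ^ 2 + 2 * N2 ^ 2 * ‖p‖ ^ 2
            - (‖L‖ * ‖y‖ - N2 * ‖p‖) ^ 2 := by ring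
      linarith [pow_le_pow_left₀ (norm_nonneg r1) hb1 2, e,
        sq_nonneg (‖L‖ * ‖y‖ - N2 * ‖p‖)]
    have hsq2 : ‖r2‖ ^ 2 ≤ 2 * ‖Ls‖ ^ 2 * ‖p‖ ^ 2 + 2 * N4 ^ 2 * ‖y‖ ^ 2 := by
      have e : (‖Ls‖ * ‖p‖ + N4 * ‖y‖) ^ 2
          = 2 * ‖Ls‖ ^ 2 * ‖p‖ ^ 2 + 2 * N4 ^ 2 * ‖y‖ ^ 2
            - (‖Ls‖ * ‖p‖ - N4 * ‖y‖) ^ 2 := by ring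
      linarith [pow_le_pow_left₀ (norm_nonneg r2) hb2 2, e,
        sq_nonneg (‖Ls‖ * ‖p‖ - N4 * ‖y‖)]
    linarith [hsq1, hsq2,
      mul_nonneg (sq_nonneg N2) (sq_nonneg ‖y‖),
      mul_nonneg (sq_nonneg ‖Ls‖) (sq_nonneg ‖y‖),
      mul_nonneg (sq_nonneg ‖L‖) (sq_nonneg ‖p‖),
      mul_nonneg (sq_nonneg N4) (sq_nonneg ‖p‖),
      sq_nonneg ‖y‖, sq_nonneg ‖p‖]
end
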